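/- Let T : X → Y be a bounded linear operator between Banach spaces. Then cc_DP(T) ≤ cc(T) ≤ 2·cc_DP(T). -/

import Mathlib

/-!
`χ₀(T(L)) ≤ cc(T)`: if `χ₀(T(L)) > c`, a greedy choice gives a `c`-separated sequence in `T(L)`.
Its preimages in the weakly compact set `L` have a weakly Cauchy subsequence (a weakly compact set
is weakly sequentially compact), whose image is still `c`-separated, so its `ca` is at least `c`.

`cc(T) ≤ 2 cc_DP(T)`: if `ca(T x) > c` for a weakly Cauchy `x` in the unit ball, pick pairs
`k, l ≥ m` with `‖T x_k - T x_l‖ > c`. The halved differences `z_m = (x_k - x_l) / 2` form a weakly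
null sequence in the unit ball, so `L = {0} ∪ {z_m}` is weakly compact. The points `T z_m` are
weakly null of norm `> c / 2`, and weak lower semicontinuity of the norm shows that no finite
subset of `T(L)` approximates `T(L)` to within less than `c / 2`.
-/

open Filter Metric Set NormedSpace
open scoped Topology

noncomputable section

/-- The non-symmetrized Hausdorff distance `d̂(A,B) = sup_{a ∈ A} dist(a, B)`,
formulated with an abstract distance function `d`. -/
def hdD {Z : Type*} (d : Z → Z → ℝ) (A B : Set Z) : ℝ :=
  ⨆ a : A, ⨅ b : B, d a b

/-- `χ₀(A) = inf { d̂(A,F) : F ⊆ A finite nonempty }`. -/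
def chi0D {Z : Type*} (d : Z → Z → ℝ) (A : Set Z) : ℝ :=
  sInf {r | ∃ F : Set Z, F ⊆ A ∧ F.Finite ∧ F.Nonempty ∧ r = hdD d A F}

/-- A subset of a normed space is weakly compact if it is compact in the weak topology. -/
def IsWeaklyCompact (𝕜 : Type*) [RCLike 𝕜] {Z : Type*} [NormedAddCommGroup Z]
    [NormedSpace 𝕜 Z] (K : Set Z) : Prop :=
  IsCompact (toWeakSpace 𝕜 Z '' K)

/-- `ca((x_k)) = inf_n sup { ‖x_k - x_l‖ : k, l ≥ n }`, the measure of
non-Cauchyness of a sequence. -/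
def caSeq {Z : Type*} [SeminormedAddGroup Z] (x : ℕ → Z) : ℝ :=
  ⨅ n : ℕ, ⨆ p : {p : ℕ × ℕ // n ≤ p.1 ∧ n ≤ p.2}, ‖x (p : ℕ × ℕ).1 - x (p : ℕ × ℕ).2‖

/-- A sequence is weakly Cauchy if every continuous linear functional sends it
to a Cauchy scalar sequence. -/
def WeaklyCauchy (𝕜 : Type*) [RCLike 𝕜] {X : Type*} [NormedAddCommGroup X]
    [NormedSpace 𝕜 X] (x : ℕ → X) : Prop :=
  ∀ φ : StrongDual 𝕜 X, CauchySeq fun k => φ (x k)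

/-- `cc(T)`, the measure of non-complete-continuity of an operator `T`. -/
def ccOp (𝕜 : Type*) [RCLike 𝕜] {X Y : Type*} [NormedAddCommGroup X] [NormedSpace 𝕜 X]
    [NormedAddCommGroup Y] [NormedSpace 𝕜 Y] (T : X →L[𝕜] Y) : ℝ :=
  sSup {r | ∃ x : ℕ → X, (∀ k, x k ∈ closedBall (0 : X) 1) ∧ WeaklyCauchy 𝕜 x ∧
    r = caSeq fun k => T (x k)}

/-- `cc_DP(T) = sup { χ₀(T(L)) : L ⊆ B_X weakly compact }`. -/
def ccDP (𝕜 : Type*) [RCLike 𝕜] {X Y : Type*} [NormedAddCommGroup X] [NormedSpace 𝕜 X]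
    [NormedAddCommGroup Y] [NormedSpace 𝕜 Y] (T : X →L[𝕜] Y) : ℝ :=
  sSup {r | ∃ L : Set X, L.Nonempty ∧ L ⊆ closedBall (0 : X) 1 ∧ IsWeaklyCompact 𝕜 L ∧
    r = chi0D dist (T '' L)}

open Bornology

section Distance

variable {Z : Type*} [PseudoMetricSpace Z] {A B : Set Z} {r : ℝ}

lemma hdD_nonneg (A B : Set Z) : 0 ≤ hdD dist A B :=
  Real.iSup_nonneg fun _ => Real.iInf_nonneg fun _ => dist_nonneg

lemma chi0D_le_hdD (hBA : B ⊆ A) (hB : B.Finite) (hB₀ : B.Nonempty) :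
    chi0D dist A ≤ hdD dist A B :=
  csInf_le ⟨0, by rintro r ⟨F, -, -, -, rfl⟩; exact hdD_nonneg A F⟩ ⟨B, hBA, hB, hB₀, rfl⟩

lemma le_chi0D (hA : A.Nonempty)
    (h : ∀ F ⊆ A, F.Finite → F.Nonempty → r ≤ hdD dist A F) : r ≤ chi0D dist A := by
  obtain ⟨a, ha⟩ := hA
  refine le_csInf ⟨_, {a}, singleton_subset_iff.mpr ha, finite_singleton a, singleton_nonempty a,
    rfl⟩ ?_
  rintro _ ⟨F, hFA, hF, hF₀, rfl⟩
  exact h F hFA hF hF₀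

lemma iInf_dist_le (x : Z) {b : Z} (hb : b ∈ B) : ⨅ y : B, dist x y ≤ dist x b :=
  ciInf_le ⟨0, by rintro _ ⟨_, rfl⟩; exact dist_nonneg⟩ (⟨b, hb⟩ : B)

lemma chi0D_le_diam (hA : IsBounded A) (hA₀ : A.Nonempty) : chi0D dist A ≤ diam A := by
  obtain ⟨a, ha⟩ := hA₀
  refine (chi0D_le_hdD (singleton_subset_iff.mpr ha) (finite_singleton a)
    (singleton_nonempty a)).trans <| Real.iSup_le (fun x => ?_) diam_nonneg
  exact (iInf_dist_le _ (mem_singleton a)).trans (dist_le_diam_of_mem hA x.2 ha)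

lemma exists_forall_lt_dist_of_lt_hdD (hA : A.Nonempty) (h : r < hdD dist A B) :
    ∃ a ∈ A, ∀ b ∈ B, r < dist a b := by
  have := hA.to_subtype
  obtain ⟨a, ha⟩ := exists_lt_of_lt_ciSup h
  exact ⟨a, a.2, fun b hb => ha.trans_le (iInf_dist_le _ hb)⟩

lemma exists_dist_le_hdD (hA : IsBounded A) (hB : B.Finite) (hB₀ : B.Nonempty) {a : Z}
    (ha : a ∈ A) : ∃ b ∈ B, dist a b ≤ hdD dist A B := by
  have := hB.to_subtype
  have := hB₀.to_subtype
  obtain ⟨b, hb⟩ := exists_eq_ciInf_of_finite (f := fun b : B => dist a b)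
  refine ⟨b, b.2, hb ▸ le_ciSup (f := fun x : A => ⨅ b : B, dist (x : Z) b) ?_ ⟨a, ha⟩⟩
  obtain ⟨b₀, hb₀⟩ := hB₀
  obtain ⟨C, hC⟩ := (isBounded_iff_subset_closedBall b₀).mp hA
  exact ⟨C, by rintro _ ⟨x, rfl⟩; exact (iInf_dist_le _ hb₀).trans (hC x.2)⟩

lemma exists_seq_lt_dist_of_lt_chi0D (hA : A.Nonempty) (h : r < chi0D dist A) :
    ∃ y : ℕ → Z, (∀ n, y n ∈ A) ∧ ∀ m n, m < n → r < dist (y m) (y n) := by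
  refine exists_seq_of_forall_finset_exists (· ∈ A) (fun a b => r < dist a b) fun F hFA => ?_
  rcases F.eq_empty_or_nonempty with rfl | hF₀
  · exact hA.imp fun a ha => ⟨ha, by simp⟩
  obtain ⟨a, ha, hfar⟩ := exists_forall_lt_dist_of_lt_hdD hA
    (h.trans_le (chi0D_le_hdD hFA F.finite_toSet hF₀))
  exact ⟨a, ha, fun b hb => dist_comm a b ▸ hfar b hb⟩

end Distance

section CaSeq

variable {Z : Type*} [SeminormedAddCommGroup Z] {x : ℕ → Z} {r : ℝ}

lemma norm_sub_le_diam (hx : IsBounded (range x)) (k l : ℕ) : ‖x k - x l‖ ≤ diam (range x) :=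
  dist_eq_norm (x k) (x l) ▸ dist_le_diam_of_mem hx (mem_range_self k) (mem_range_self l)

lemma caSeq_le_diam (hx : IsBounded (range x)) : caSeq x ≤ diam (range x) :=
  (ciInf_le ⟨0, by rintro _ ⟨n, rfl⟩; exact Real.iSup_nonneg fun _ => norm_nonneg _⟩ 0).trans <|
    Real.iSup_le (fun p => norm_sub_le_diam hx _ _) diam_nonneg

lemma le_caSeq (hx : IsBounded (range x)) (h : ∀ n, ∃ k l, n ≤ k ∧ n ≤ l ∧ r ≤ ‖x k - x l‖) :
    r ≤ caSeq x := by
  refine le_ciInf fun n => ?_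
  obtain ⟨k, l, hk, hl, hr⟩ := h n
  refine hr.trans (le_ciSup (f := fun p : {p : ℕ × ℕ // n ≤ p.1 ∧ n ≤ p.2} =>
    ‖x p.1.1 - x p.1.2‖) ⟨diam (range x), ?_⟩ ⟨(k, l), hk, hl⟩)
  rintro _ ⟨p, rfl⟩
  exact norm_sub_le_diam hx _ _

lemma exists_lt_norm_sub_of_lt_caSeq (h : r < caSeq x) (n : ℕ) :
    ∃ k l, n ≤ k ∧ n ≤ l ∧ r < ‖x k - x l‖ := by
  have : Nonempty {p : ℕ × ℕ // n ≤ p.1 ∧ n ≤ p.2} := ⟨⟨(n, n), le_rfl, le_rfl⟩⟩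
  obtain ⟨p, hp⟩ := exists_lt_of_lt_ciSup <| h.trans_le <|
    ciInf_le ⟨0, by rintro _ ⟨n, rfl⟩; exact Real.iSup_nonneg fun _ => norm_nonneg _⟩ n
  exact ⟨p.1.1, p.1.2, p.2.1, p.2.2, hp⟩

end CaSeq

lemma IsCompact.isSeqCompact_of_countable_separating {α Y : Type*} [TopologicalSpace α]
    [MetricSpace Y] {K : Set α} (hK : IsCompact K) (f : ℕ → α → Y) (hf : ∀ n, Continuous (f n))
    (hsep : ∀ x ∈ K, ∀ y ∈ K, (∀ n, f n x = f n y) → x = y) : IsSeqCompact K := by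
  have : CompactSpace K := isCompact_iff_compactSpace.mp hK
  have : TopologicalSpace.MetrizableSpace K :=
    Metric.PiNatEmbed.TopologicalSpace.MetrizableSpace.of_countable_separating
      (fun n (x : K) => f n x) (fun n => (hf n).comp continuous_subtype_val) fun x y hxy => by
        by_contra! h
        exact hxy (Subtype.ext (hsep x x.2 y y.2 h))
  simpa using IsSeqCompact.range (continuous_subtype_val (p := (· ∈ K))).seqContinuous

section WeakTopology

variable {𝕜 : Type*} [RCLike 𝕜] {X : Type*} [NormedAddCommGroup X] [NormedSpace 𝕜 X]

lemma tendsto_toWeakSpace_iff {α : Type*} {l : Filter α} {f : α → X} {x : X} :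
    Tendsto (fun i => toWeakSpace 𝕜 X (f i)) l (𝓝 (toWeakSpace 𝕜 X x)) ↔
      ∀ φ : StrongDual 𝕜 X, Tendsto (fun i => φ (f i)) l (𝓝 (φ x)) :=
  WeakBilin.tendsto_iff_forall_eval_tendsto _ (separatingDual_iff_injective.mp inferInstance)

lemma Submodule.isClosed_toWeakSpace_image {M : Submodule 𝕜 X} (hM : IsClosed (M : Set X)) :
    IsClosed (toWeakSpace 𝕜 X '' M) := by
  let : NormedSpace ℝ X := NormedSpace.restrictScalars ℝ 𝕜 X
  have : IsScalarTower ℝ 𝕜 X := .of_algebraMap_smul fun _ _ => rfl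
  have hconv : Convex ℝ (M : Set X) := (M.restrictScalars ℝ).convex
  rw [← hM.closure_eq, hconv.toWeakSpace_closure 𝕜]
  exact isClosed_closure

/-- Take norming functionals of a dense sequence. -/
lemma TopologicalSpace.IsSeparable.exists_seq_strongDual_eq_zero {s : Set X}
    (hs : TopologicalSpace.IsSeparable s) :
    ∃ φ : ℕ → StrongDual 𝕜 X, ∀ x ∈ s, (∀ n, φ n x = 0) → x = 0 := by
  obtain ⟨c, hc, hsc⟩ := hs
  obtain ⟨v, hcv⟩ := Set.countable_iff_exists_subset_range.mp hc
  choose φ hφ₁ hφv using fun n => exists_dual_vector'' 𝕜 (v n)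
  refine ⟨φ, fun x hx hφx => ?_⟩
  have hv : ∀ n, ‖v n‖ ≤ ‖x - v n‖ := fun n =>
    calc ‖v n‖ = ‖φ n (v n - x)‖ := by
          rw [map_sub, hφx n, sub_zero, hφv n, RCLike.norm_ofReal, abs_norm]
      _ ≤ 1 * ‖v n - x‖ := (φ n).le_of_opNorm_le (hφ₁ n) _
      _ = ‖x - v n‖ := by rw [one_mul, norm_sub_rev]
  by_contra hx₀
  obtain ⟨n, hn⟩ := Metric.mem_closure_range_iff.mp (closure_mono hcv (hsc hx)) (‖x‖ / 2)
    (by positivity)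
  rw [dist_eq_norm] at hn
  linarith [norm_sub_norm_le x (v n), hv n]

/-- The sequence lies in a closed separable subspace `M`, which is weakly closed by Mazur's
theorem; countably many functionals separate the points of `M`, so the weak topology on the
weakly compact set `L ∩ M` is metrizable. -/
lemma IsWeaklyCompact.exists_strictMono_weaklyCauchy {L : Set X} (hL : IsWeaklyCompact 𝕜 L)
    {x : ℕ → X} (hx : ∀ n, x n ∈ L) : ∃ s : ℕ → ℕ, StrictMono s ∧ WeaklyCauchy 𝕜 (x ∘ s) := by
  set M := (Submodule.span 𝕜 (range x)).topologicalClosure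
  have hxM : ∀ n, x n ∈ M := fun n =>
    Submodule.le_topologicalClosure _ (Submodule.subset_span (mem_range_self n))
  have hMsep : TopologicalSpace.IsSeparable (M : Set X) :=
    (countable_range x).isSeparable.span.closure
  obtain ⟨φ, hφ⟩ := hMsep.exists_seq_strongDual_eq_zero (𝕜 := 𝕜)
  have hK : IsSeqCompact (toWeakSpace 𝕜 X '' L ∩ toWeakSpace 𝕜 X '' M) := by
    refine (hL.inter_right (Submodule.isClosed_toWeakSpace_image
      (Submodule.isClosed_topologicalClosure _))).isSeqCompact_of_countable_separating
      (fun n w => φ n ((toWeakSpace 𝕜 X).symm w))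
      (fun n => WeakBilin.eval_continuous _ (φ n)) ?_
    rintro _ ⟨-, a, ha, rfl⟩ _ ⟨-, b, hb, rfl⟩ hab
    simp only [LinearEquiv.symm_apply_apply] at hab
    rw [sub_eq_zero.mp (hφ (a - b) (M.sub_mem ha hb) fun n => by rw [map_sub, hab, sub_self])]
  obtain ⟨_, -, s, hs, hlim⟩ := hK (x := fun n => toWeakSpace 𝕜 X (x n))
    fun n => ⟨mem_image_of_mem _ (hx n), mem_image_of_mem _ (hxM n)⟩
  exact ⟨s, hs, fun ψ => ((WeakBilin.eval_continuous _ ψ).tendsto _ |>.comp hlim).cauchySeq⟩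

lemma WeaklyCauchy.tendsto_sub_comp {x : ℕ → X} (hx : WeaklyCauchy 𝕜 x) {k l : ℕ → ℕ}
    (hk : Tendsto k atTop atTop) (hl : Tendsto l atTop atTop) :
    Tendsto (fun m => toWeakSpace 𝕜 X (x (k m) - x (l m))) atTop (𝓝 0) := by
  rw [← map_zero (toWeakSpace 𝕜 X), tendsto_toWeakSpace_iff]
  intro φ
  obtain ⟨t, ht⟩ := cauchySeq_tendsto_of_complete (hx φ)
  simpa using (ht.comp hk).sub (ht.comp hl)

lemma isWeaklyCompact_insert_range {z : ℕ → X} {a : X}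
    (hz : Tendsto (fun m => toWeakSpace 𝕜 X (z m)) atTop (𝓝 (toWeakSpace 𝕜 X a))) :
    IsWeaklyCompact 𝕜 (insert a (range z)) := by
  rw [IsWeaklyCompact, image_insert_eq, ← range_comp]
  exact hz.isCompact_insert_range

/-- Weak lower semicontinuity of the norm, tested on a norming functional of `y`. -/
lemma norm_le_of_frequently_norm_sub_le {w : ℕ → X}
    (hw : Tendsto (fun m => toWeakSpace 𝕜 X (w m)) atTop (𝓝 0)) {y : X} {r : ℝ}
    (h : ∃ᶠ m in atTop, ‖y - w m‖ ≤ r) : ‖y‖ ≤ r := by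
  obtain ⟨φ, hφ₁, hφy⟩ := exists_dual_vector'' 𝕜 y
  rw [← map_zero (toWeakSpace 𝕜 X), tendsto_toWeakSpace_iff] at hw
  have hlim : Tendsto (fun m => ‖φ (y - w m)‖) atTop (𝓝 ‖y‖) := by
    simpa [hφy] using ((hw φ).const_sub (φ y)).norm
  refine le_of_tendsto_of_frequently hlim (h.mono fun m hm => ?_)
  exact ((φ.le_of_opNorm_le hφ₁ _).trans_eq (one_mul _)).trans hm

/-- Pigeonhole: for finite `F`, infinitely many `w m` lie within `d̂(A, F)` of a single `f ∈ F`,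
so `‖f‖ ≤ d̂(A, F)` by weak lower semicontinuity of the norm. -/
lemma le_chi0D_insert_zero_range {w : ℕ → X}
    (hw : Tendsto (fun m => toWeakSpace 𝕜 X (w m)) atTop (𝓝 0)) (hbdd : IsBounded (range w))
    {r : ℝ} (hr : ∀ m, r ≤ ‖w m‖) : r ≤ chi0D dist (insert 0 (range w)) := by
  refine le_chi0D (insert_nonempty _ _) fun F hFA hF hF₀ => ?_
  by_contra! hlt
  obtain ⟨f, hfF, hfreq⟩ := hF.frequently_exists.mp <| Frequently.of_forall (f := atTop) fun m =>
    exists_dist_le_hdD (hbdd.insert 0) hF hF₀ (mem_insert_of_mem 0 (mem_range_self m))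
  rcases hFA hfF with rfl | ⟨m₀, rfl⟩
  · obtain ⟨m, hm⟩ := hfreq.exists
    rw [dist_zero_right] at hm
    linarith [hr m]
  · have := norm_le_of_frequently_norm_sub_le hw
      (hfreq.mono fun m hm => by rwa [dist_comm, dist_eq_norm] at hm)
    linarith [hr m₀]

end WeakTopology

section Operator

variable {𝕜 : Type*} [RCLike 𝕜] {X Y : Type*} [NormedAddCommGroup X] [NormedSpace 𝕜 X]
  [NormedAddCommGroup Y] [NormedSpace 𝕜 Y] (T : X →L[𝕜] Y)

lemma ContinuousLinearMap.isBounded_image_closedBall : IsBounded (T '' closedBall (0 : X) 1) :=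
  T.lipschitz.isBounded_image isBounded_closedBall

lemma caSeq_le_ccOp {x : ℕ → X} (hx : ∀ k, x k ∈ closedBall (0 : X) 1)
    (hwc : WeaklyCauchy 𝕜 x) : caSeq (fun k => T (x k)) ≤ ccOp 𝕜 T := by
  refine le_csSup ⟨diam (T '' closedBall 0 1), ?_⟩ ⟨x, hx, hwc, rfl⟩
  rintro _ ⟨y, hy, -, rfl⟩
  have hsub : range (fun k => T (y k)) ⊆ T '' closedBall 0 1 :=
    range_subset_iff.mpr fun k => mem_image_of_mem T (hy k)
  exact (caSeq_le_diam (T.isBounded_image_closedBall.subset hsub)).trans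
    (diam_mono hsub T.isBounded_image_closedBall)

lemma chi0D_le_ccDP {L : Set X} (hL₀ : L.Nonempty) (hL : L ⊆ closedBall 0 1)
    (hLw : IsWeaklyCompact 𝕜 L) : chi0D dist (T '' L) ≤ ccDP 𝕜 T := by
  refine le_csSup ⟨diam (T '' closedBall 0 1), ?_⟩ ⟨L, hL₀, hL, hLw, rfl⟩
  rintro _ ⟨K, hK₀, hK, -, rfl⟩
  have hsub := image_mono (f := T) hK
  exact (chi0D_le_diam (T.isBounded_image_closedBall.subset hsub) (hK₀.image T)).trans
    (diam_mono hsub T.isBounded_image_closedBall)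

lemma chi0D_image_le_ccOp {L : Set X} (hL₀ : L.Nonempty) (hL : L ⊆ closedBall 0 1)
    (hLw : IsWeaklyCompact 𝕜 L) : chi0D dist (T '' L) ≤ ccOp 𝕜 T := by
  refine le_of_forall_lt_imp_le_of_dense fun c hc => ?_
  obtain ⟨y, hyL, hsep⟩ := exists_seq_lt_dist_of_lt_chi0D (hL₀.image T) hc
  choose x hxL hxy using hyL
  obtain ⟨s, hs, hwc⟩ := hLw.exists_strictMono_weaklyCauchy hxL
  have hbdd : IsBounded (range fun k => T ((x ∘ s) k)) := T.isBounded_image_closedBall.subset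
    (range_subset_iff.mpr fun k => mem_image_of_mem T (hL (hxL _)))
  calc c ≤ caSeq fun k => T ((x ∘ s) k) := le_caSeq hbdd fun n =>
        ⟨n + 1, n, n.le_succ, le_rfl, by
          simpa only [Function.comp_apply, hxy, ← dist_eq_norm, dist_comm] using
            (hsep _ _ (hs n.lt_succ_self)).le⟩
    _ ≤ ccOp 𝕜 T := caSeq_le_ccOp T (fun k => hL (hxL _)) hwc

lemma caSeq_le_two_mul_ccDP {x : ℕ → X} (hx : ∀ k, x k ∈ closedBall (0 : X) 1)
    (hwc : WeaklyCauchy 𝕜 x) : caSeq (fun k => T (x k)) ≤ 2 * ccDP 𝕜 T := by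
  refine le_of_forall_lt_imp_le_of_dense fun c hc => ?_
  choose k l hk hl hkl using exists_lt_norm_sub_of_lt_caSeq hc
  set z : ℕ → X := fun m => (2 : 𝕜)⁻¹ • (x (k m) - x (l m))
  have hz : ∀ m, z m ∈ closedBall (0 : X) 1 := fun m => by
    rw [mem_closedBall_zero_iff, norm_smul, norm_inv, RCLike.norm_ofNat]
    linarith [norm_sub_le_of_le (mem_closedBall_zero_iff.mp (hx (k m)))
      (mem_closedBall_zero_iff.mp (hx (l m)))]
  have hz₀ : Tendsto (fun m => toWeakSpace 𝕜 X (z m)) atTop (𝓝 0) := by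
    simpa [z] using (hwc.tendsto_sub_comp (tendsto_atTop_mono hk tendsto_id)
      (tendsto_atTop_mono hl tendsto_id)).const_smul (2 : 𝕜)⁻¹
  have hTz₀ : Tendsto (fun m => toWeakSpace 𝕜 Y (T (z m))) atTop (𝓝 0) :=
    ((WeakSpace.map T).continuous.tendsto' 0 0 (map_zero _)).comp hz₀
  have hTz : ∀ m, c / 2 ≤ ‖T (z m)‖ := fun m => by
    simp only [z, map_smul, map_sub, norm_smul, norm_inv, RCLike.norm_ofNat]
    linarith [hkl m]
  have hL : insert 0 (range z) ⊆ closedBall 0 1 :=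
    insert_subset (mem_closedBall_self zero_le_one) (range_subset_iff.mpr hz)
  have hTL : T '' insert 0 (range z) = insert 0 (range fun m => T (z m)) := by
    rw [image_insert_eq, map_zero, ← range_comp]
    rfl
  have hbdd : IsBounded (range fun m => T (z m)) := T.isBounded_image_closedBall.subset
    (range_subset_iff.mpr fun m => mem_image_of_mem T (hz m))
  have := hTL ▸ le_chi0D_insert_zero_range hTz₀ hbdd hTz
  linarith [chi0D_le_ccDP T (insert_nonempty _ _) hL
    (isWeaklyCompact_insert_range (by simpa using hz₀))]

end Operator

theorem ccDP_le_cc_le_two_ccDP_general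
    {𝕜 : Type*} [RCLike 𝕜] {X Y : Type*}
    [NormedAddCommGroup X] [NormedSpace 𝕜 X]
    [NormedAddCommGroup Y] [NormedSpace 𝕜 Y]
    (T : X →L[𝕜] Y) :
    ccDP 𝕜 T ≤ ccOp 𝕜 T ∧ ccOp 𝕜 T ≤ 2 * ccDP 𝕜 T := by
  constructor
  · refine csSup_le ⟨_, {0}, singleton_nonempty 0, by simp, by simp [IsWeaklyCompact], rfl⟩ ?_
    rintro _ ⟨L, hL₀, hL, hLw, rfl⟩
    exact chi0D_image_le_ccOp T hL₀ hL hLw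
  · refine csSup_le ⟨_, 0, fun _ => mem_closedBall_self zero_le_one,
      fun φ => by simpa using cauchySeq_const (0 : 𝕜), rfl⟩ ?_
    rintro _ ⟨x, hx, hwc, rfl⟩
    exact caSeq_le_two_mul_ccDP T hx hwc

/-- For any bounded operator `T : X → Y` between Banach spaces:
`cc_DP(T) ≤ cc(T) ≤ 2·cc_DP(T)`. -/
theorem ccDP_le_cc_le_two_ccDP
    {𝕜 : Type*} [RCLike 𝕜] {X Y : Type*}
    [NormedAddCommGroup X] [NormedSpace 𝕜 X] [CompleteSpace X]
    [NormedAddCommGroup Y] [NormedSpace 𝕜 Y] [CompleteSpace Y]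
    (T : X →L[𝕜] Y) :
    ccDP 𝕜 T ≤ ccOp 𝕜 T ∧ ccOp 𝕜 T ≤ 2 * ccDP 𝕜 T :=
  ccDP_le_cc_le_two_ccDP_general T
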